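/- Let E > 0. For all m, n ∈ ℕ₀ and both signs, the functions F^±_{m,n} are simultaneous generalized eigenfunctions of D² and D̃² with purely imaginary eigenvalues: (D² F^±_{m,n})(t,x) = ±2iE(m + ½) F^±_{m,n}(t,x) and (D̃² F^±_{m,n})(t,x) = ±2iE(n + ½) F^±_{m,n}(t,x) for all (t,x) ∈ ℝ². -/

import Mathlib

open MeasureTheory Filter Complex

noncomputable def dT (f : ℝ → ℝ → ℂ) (t x : ℝ) : ℂ := deriv (fun s => f s x) t

noncomputable def dX (f : ℝ → ℝ → ℂ) (t x : ℝ) : ℂ := deriv (fun s => f t s) x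

/-- `D²f = ½[−(∂_t²f − ∂_x²f) − 2iE(x ∂_t f + t ∂_x f) − E²(t² − x²)f]`. -/
noncomputable def D2 (E : ℝ) (f : ℝ → ℝ → ℂ) (t x : ℝ) : ℂ :=
  (1 / 2 : ℂ) *
    (-(dT (dT f) t x - dX (dX f) t x)
      - 2 * Complex.I * (E : ℂ) * ((x : ℂ) * dT f t x + (t : ℂ) * dX f t x)
      - (E : ℂ) ^ 2 * ((t : ℂ) ^ 2 - (x : ℂ) ^ 2) * f t x)

/-- `D̃²f = ½[−(∂_t²f − ∂_x²f) + 2iE(x ∂_t f + t ∂_x f) − E²(t² − x²)f]`. -/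
noncomputable def Dt2 (E : ℝ) (f : ℝ → ℝ → ℂ) (t x : ℝ) : ℂ :=
  (1 / 2 : ℂ) *
    (-(dT (dT f) t x - dX (dX f) t x)
      + 2 * Complex.I * (E : ℂ) * ((x : ℂ) * dT f t x + (t : ℂ) * dX f t x)
      - (E : ℂ) ^ 2 * ((t : ℂ) ^ 2 - (x : ℂ) ^ 2) * f t x)

/-- The explicit expression `F^±_{m,n}` for `m ≥ n` (sign `s = ±1`). -/
noncomputable def Fge (E s : ℝ) (m n : ℕ) (t x : ℝ) : ℂ :=
  ((E / (2 * Real.pi) : ℝ) : ℂ) * ((Real.sqrt (m.factorial * n.factorial) : ℝ) : ℂ) *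
    Complex.exp (-(s : ℂ) * Complex.I * (E : ℂ) * ((t : ℂ) ^ 2 - (x : ℂ) ^ 2) / 2) *
    (Complex.exp ((s : ℂ) * Complex.I * (Real.pi : ℂ) / 4) * ((Real.sqrt E : ℝ) : ℂ)) ^ (m - n) *
    ((t : ℂ) - (s : ℂ) * (x : ℂ)) ^ (m - n) *
    ∑ p ∈ Finset.range (n + 1),
      ((s : ℂ) * Complex.I * (E : ℂ) * ((t : ℂ) ^ 2 - (x : ℂ) ^ 2)) ^ (n - p) * (-1 : ℂ) ^ p /
        (((m - p).factorial : ℂ) * ((n - p).factorial : ℂ) * (p.factorial : ℂ))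

/-- `F^±_{m,n}` for all `m, n`, with `F^±_{m,n} := conj(F^∓_{n,m})` when `m < n`. -/
noncomputable def Fmn (E s : ℝ) (m n : ℕ) (t x : ℝ) : ℂ :=
  if n ≤ m then Fge E s m n t x else (starRingEnd ℂ) (Fge E (-s) n m t x)

open Finset

/-!
For `f = g(u) h(v)` with `u = t² - x²`, `v = t - σx` and `σ² = 1`, the wave operator and the boost
generator see only `u` and `v`: `(∂ₜ² - ∂ₓ²) f = 4 (u g'' h + g' h + v g' h')` and
`(x∂ₜ + t∂ₓ) f = -σ v g h'`. For `h = vᵏ` (so `v h' = k h`) both `D²` and `D̃²` therefore reduce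
to the ordinary differential operator `u g'' + (k + 1) g'` acting on `g`. The function `F^±_{n+k,n}`
has this form with `g(u) = e^{-au/2} L(u)`, `a = ±iE`, where `L` is a generalized Laguerre
polynomial: `u L'' + (k + 1 - a u) L' + a n L = 0`, which yields the eigenvalues `a (2(n + k) + 1)`
and `a (2n + 1)`. Complex conjugation swaps `D²` and `D̃²`, which settles the case `m < n`.
-/

noncomputable def lightConeProd (g h : ℂ → ℂ) (σ : ℂ) (t x : ℝ) : ℂ :=
  g ((t : ℂ) ^ 2 - (x : ℂ) ^ 2) * h (t - σ * x)

section LightConeProd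

variable {g g' g'' h h' h'' : ℂ → ℂ} {σ : ℂ}

theorem hasDerivAt_lightConeProd_left (hg : ∀ u, HasDerivAt g (g' u) u)
    (hh : ∀ v, HasDerivAt h (h' v) v) (t x : ℝ) :
    HasDerivAt (fun s => lightConeProd g h σ s x)
      (2 * t * lightConeProd g' h σ t x + lightConeProd g h' σ t x) t := by
  have hu : HasDerivAt (fun z : ℂ => z ^ 2 - (x : ℂ) ^ 2) (2 * t) t := by
    simpa using (hasDerivAt_pow 2 (t : ℂ)).sub_const ((x : ℂ) ^ 2)
  have hv : HasDerivAt (fun z : ℂ => z - σ * x) 1 t := (hasDerivAt_id _).sub_const (σ * x)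
  exact (((hg _).comp _ hu).mul ((hh _).comp _ hv)).comp_ofReal.congr_deriv
    (by simp only [lightConeProd, Function.comp_apply]; ring)

theorem hasDerivAt_lightConeProd_right (hg : ∀ u, HasDerivAt g (g' u) u)
    (hh : ∀ v, HasDerivAt h (h' v) v) (t x : ℝ) :
    HasDerivAt (fun y => lightConeProd g h σ t y)
      (-(2 * x * lightConeProd g' h σ t x) - σ * lightConeProd g h' σ t x) x := by
  have hu : HasDerivAt (fun z : ℂ => (t : ℂ) ^ 2 - z ^ 2) (-(2 * x)) x := by
    simpa using (hasDerivAt_pow 2 (x : ℂ)).const_sub _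
  have hv : HasDerivAt (fun z : ℂ => t - σ * z) (-σ) x := by
    simpa using ((hasDerivAt_id (x : ℂ)).const_mul σ).const_sub (t : ℂ)
  exact (((hg _).comp _ hu).mul ((hh _).comp _ hv)).comp_ofReal.congr_deriv
    (by simp only [lightConeProd, Function.comp_apply]; ring)

theorem dT_lightConeProd (hg : ∀ u, HasDerivAt g (g' u) u) (hh : ∀ v, HasDerivAt h (h' v) v) :
    dT (lightConeProd g h σ) =
      fun t x => 2 * t * lightConeProd g' h σ t x + lightConeProd g h' σ t x := by
  ext t x
  exact (hasDerivAt_lightConeProd_left hg hh t x).deriv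

theorem dX_lightConeProd (hg : ∀ u, HasDerivAt g (g' u) u) (hh : ∀ v, HasDerivAt h (h' v) v) :
    dX (lightConeProd g h σ) =
      fun t x => -(2 * x * lightConeProd g' h σ t x) - σ * lightConeProd g h' σ t x := by
  ext t x
  exact (hasDerivAt_lightConeProd_right hg hh t x).deriv

theorem boost_lightConeProd (hg : ∀ u, HasDerivAt g (g' u) u) (hh : ∀ v, HasDerivAt h (h' v) v)
    (hσ : σ ^ 2 = 1) (t x : ℝ) :
    x * dT (lightConeProd g h σ) t x + t * dX (lightConeProd g h σ) t x =
      -σ * (t - σ * x) * lightConeProd g h' σ t x := by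
  rw [dT_lightConeProd hg hh, dX_lightConeProd hg hh]
  linear_combination (-(x : ℂ) * lightConeProd g h' σ t x) * hσ

variable (hg : ∀ u, HasDerivAt g (g' u) u) (hg' : ∀ u, HasDerivAt g' (g'' u) u)
  (hh : ∀ v, HasDerivAt h (h' v) v) (hh' : ∀ v, HasDerivAt h' (h'' v) v)
include hg hg' hh hh'

theorem dT_dT_lightConeProd (t x : ℝ) :
    dT (dT (lightConeProd g h σ)) t x =
      2 * lightConeProd g' h σ t x
        + 2 * t * (2 * t * lightConeProd g'' h σ t x + lightConeProd g' h' σ t x)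
        + (2 * t * lightConeProd g' h' σ t x + lightConeProd g h'' σ t x) := by
  rw [dT_lightConeProd hg hh]
  have h2t : HasDerivAt (fun s : ℝ => 2 * (s : ℂ)) 2 t := by
    simpa using ((hasDerivAt_id (t : ℂ)).const_mul 2).comp_ofReal
  refine HasDerivAt.deriv ?_
  exact ((h2t.mul (hasDerivAt_lightConeProd_left hg' hh t x)).add
    (hasDerivAt_lightConeProd_left hg hh' t x)).congr_deriv (by ring)

theorem dX_dX_lightConeProd (t x : ℝ) :
    dX (dX (lightConeProd g h σ)) t x =
      -(2 * lightConeProd g' h σ t x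
        + 2 * x * (-(2 * x * lightConeProd g'' h σ t x) - σ * lightConeProd g' h' σ t x))
        - σ * (-(2 * x * lightConeProd g' h' σ t x) - σ * lightConeProd g h'' σ t x) := by
  rw [dX_lightConeProd hg hh]
  have h2x : HasDerivAt (fun s : ℝ => 2 * (s : ℂ)) 2 x := by
    simpa using ((hasDerivAt_id (x : ℂ)).const_mul 2).comp_ofReal
  refine HasDerivAt.deriv ?_
  exact ((h2x.mul (hasDerivAt_lightConeProd_right hg' hh t x)).neg.sub
    ((hasDerivAt_lightConeProd_right hg hh' t x).const_mul σ)).congr_deriv (by ring)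

theorem wave_lightConeProd (hσ : σ ^ 2 = 1) (t x : ℝ) :
    dT (dT (lightConeProd g h σ)) t x - dX (dX (lightConeProd g h σ)) t x =
      4 * (((t : ℂ) ^ 2 - (x : ℂ) ^ 2) * lightConeProd g'' h σ t x + lightConeProd g' h σ t x
        + (t - σ * x) * lightConeProd g' h' σ t x) := by
  rw [dT_dT_lightConeProd hg hg' hh hh', dX_dX_lightConeProd hg hg' hh hh']
  linear_combination (-lightConeProd g h'' σ t x) * hσ

theorem D2_lightConeProd_of_ode {E : ℝ} {μ : ℂ} {k : ℕ} (hσ : σ ^ 2 = 1)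
    (hode : ∀ u, u * g'' u + (k + 1) * g' u = (μ - E ^ 2 * u / 4) * g u)
    (hEuler : ∀ v, v * h' v = k * h v) (t x : ℝ) :
    D2 E (lightConeProd g h σ) t x = (σ * I * E * k - 2 * μ) * lightConeProd g h σ t x ∧
      Dt2 E (lightConeProd g h σ) t x = (-σ * I * E * k - 2 * μ) * lightConeProd g h σ t x := by
  have hode := hode ((t : ℂ) ^ 2 - (x : ℂ) ^ 2)
  have hEuler := hEuler (t - σ * x)
  simp only [D2, Dt2, wave_lightConeProd hg hg' hh hh' hσ, boost_lightConeProd hg hh hσ,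
    lightConeProd]
  set u : ℂ := (t : ℂ) ^ 2 - (x : ℂ) ^ 2
  constructor
  · linear_combination (-2 * h (t - σ * x)) * hode + (-2 * g' u + σ * I * E * g u) * hEuler
  · linear_combination (-2 * h (t - σ * x)) * hode + (-2 * g' u - σ * I * E * g u) * hEuler

end LightConeProd

noncomputable def polySum (c : ℕ → ℂ) (n : ℕ) (u : ℂ) : ℂ :=
  ∑ j ∈ range (n + 1), c j * u ^ j

noncomputable def polySumDeriv (c : ℕ → ℂ) (n : ℕ) (u : ℂ) : ℂ :=
  ∑ j ∈ range (n + 1), c j * (j * u ^ (j - 1))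

noncomputable def polySumDeriv2 (c : ℕ → ℂ) (n : ℕ) (u : ℂ) : ℂ :=
  ∑ j ∈ range (n + 1), c j * (j * ((j - 1 : ℕ) * u ^ (j - 1 - 1)))

section PolySum

variable (c : ℕ → ℂ) (n : ℕ)

theorem polySum_const_mul (C : ℂ) (u : ℂ) :
    polySum (fun j => C * c j) n u = C * polySum c n u := by
  simp only [polySum, mul_sum, mul_assoc]

theorem hasDerivAt_polySum (u : ℂ) : HasDerivAt (polySum c n) (polySumDeriv c n u) u :=
  HasDerivAt.fun_sum fun j _ => (hasDerivAt_pow j u).const_mul (c j)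

theorem hasDerivAt_polySumDeriv (u : ℂ) :
    HasDerivAt (polySumDeriv c n) (polySumDeriv2 c n u) u :=
  HasDerivAt.fun_sum fun j _ => ((hasDerivAt_pow (j - 1) u).const_mul (j : ℂ)).const_mul (c j)

theorem polySum_laguerre_ode {a : ℂ} {k : ℕ}
    (hc : ∀ i < n, (i + 1) * (k + i + 1) * c (i + 1) = -a * (n - i) * c i) (u : ℂ) :
    u * polySumDeriv2 c n u + (k + 1 - a * u) * polySumDeriv c n u + a * n * polySum c n u = 0 := by
  have hterm : ∀ j : ℕ, u * (c j * (j * ((j - 1 : ℕ) * u ^ (j - 1 - 1))))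
      + (k + 1 - a * u) * (c j * (j * u ^ (j - 1))) + a * n * (c j * u ^ j)
      = j * (k + j) * c j * u ^ (j - 1) + a * (n - j) * c j * u ^ j := by
    rintro (_ | _ | j)
    · simp
    · simp; ring
    · simp only [Nat.add_sub_cancel, pow_succ]; push_cast; ring
  rw [polySum, polySumDeriv, polySumDeriv2, mul_sum, mul_sum, mul_sum, ← sum_add_distrib,
    ← sum_add_distrib, sum_congr rfl fun j _ => hterm j, sum_add_distrib, sum_range_succ',
    sum_range_succ (fun j => a * (n - j) * c j * u ^ j)]
  simp only [Nat.cast_zero, zero_mul, sub_self, mul_zero, add_zero, ← sum_add_distrib]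
  refine sum_eq_zero fun i hi => ?_
  push_cast
  linear_combination u ^ i * hc i (mem_range.mp hi)

end PolySum

noncomputable def laguerreCoeff (a : ℂ) (k n j : ℕ) : ℂ :=
  (-1) ^ (n - j) * a ^ j / ((k + j).factorial * j.factorial * (n - j).factorial)

theorem laguerreCoeff_succ (a : ℂ) (k : ℕ) {n i : ℕ} (hi : i < n) :
    (i + 1) * (k + i + 1) * laguerreCoeff a k n (i + 1) = -a * (n - i) * laguerreCoeff a k n i := by
  obtain ⟨d, rfl⟩ := Nat.exists_eq_add_of_lt hi
  rw [laguerreCoeff, laguerreCoeff, show i + d + 1 - (i + 1) = d by omega,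
    show i + d + 1 - i = d + 1 by omega, ← add_assoc, Nat.factorial_succ (k + i),
    Nat.factorial_succ i, Nat.factorial_succ d]
  have hki : (k : ℂ) + i + 1 ≠ 0 := by exact_mod_cast (k + i).succ_ne_zero
  have hi1 : (i : ℂ) + 1 ≠ 0 := by exact_mod_cast i.succ_ne_zero
  have hd1 : (d : ℂ) + 1 ≠ 0 := by exact_mod_cast d.succ_ne_zero
  push_cast
  field_simp
  ring

noncomputable def expGauge (a : ℂ) (S : ℂ → ℂ) (u : ℂ) : ℂ := exp (-(a * u) / 2) * S u

theorem hasDerivAt_expGauge {S S' : ℂ → ℂ} (a : ℂ) (hS : ∀ v, HasDerivAt S (S' v) v) (u : ℂ) :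
    HasDerivAt (expGauge a S) (expGauge a (fun v => S' v - a / 2 * S v) u) u := by
  have hexp : HasDerivAt (fun v => exp (-(a * v) / 2)) (exp (-(a * u) / 2) * (-a / 2)) u := by
    simpa using (((hasDerivAt_id u).const_mul a).neg.div_const 2).cexp
  exact (hexp.mul (hS u)).congr_deriv (by simp only [expGauge]; ring)

theorem expGauge_ode {S S' S'' : ℂ → ℂ} {a u : ℂ} {k n : ℕ}
    (hS : u * S'' u + (k + 1 - a * u) * S' u + a * n * S u = 0) :
    u * expGauge a (fun v => S'' v - a / 2 * S' v - a / 2 * (S' v - a / 2 * S v)) u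
      + (k + 1) * expGauge a (fun v => S' v - a / 2 * S v) u
      = (a ^ 2 * u / 4 - a * (2 * n + k + 1) / 2) * expGauge a S u := by
  simp only [expGauge]
  linear_combination exp (-(a * u) / 2) * hS

theorem exists_Fge_eq_lightConeProd (E s : ℝ) (n k : ℕ) :
    ∃ C : ℂ, Fge E s (n + k) n = lightConeProd
      (expGauge (s * I * E) (polySum (fun j => C * laguerreCoeff (s * I * E) k n j) n))
      (· ^ k) s := by
  refine ⟨((E / (2 * Real.pi) : ℝ) : ℂ) * ((Real.sqrt ((n + k).factorial * n.factorial) : ℝ) : ℂ)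
    * (exp (s * I * Real.pi / 4) * ((Real.sqrt E : ℝ) : ℂ)) ^ k, ?_⟩
  ext t x
  have hsum : ∑ p ∈ range (n + 1),
      ((s : ℂ) * I * E * ((t : ℂ) ^ 2 - (x : ℂ) ^ 2)) ^ (n - p) * (-1 : ℂ) ^ p /
        (((n + k - p).factorial : ℂ) * ((n - p).factorial : ℂ) * (p.factorial : ℂ))
      = polySum (laguerreCoeff (s * I * E) k n) n ((t : ℂ) ^ 2 - (x : ℂ) ^ 2) := by
    rw [polySum, ← sum_range_reflect]
    refine sum_congr rfl fun p hp => ?_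
    have hp := mem_range.mp hp
    rw [laguerreCoeff, show n + 1 - 1 - p = n - p by omega, show n - (n - p) = p by omega,
      show n + k - (n - p) = k + p by omega, mul_pow]
    ring
  simp only [Fge, lightConeProd, expGauge, show n + k - n = k by omega, hsum, polySum_const_mul,
    neg_mul]
  ring

theorem Fge_eigenfunctions (E s : ℝ) (hs : (s : ℂ) ^ 2 = 1) (n k : ℕ) (t x : ℝ) :
    D2 E (Fge E s (n + k) n) t x = s * I * E * (2 * (n + k) + 1) * Fge E s (n + k) n t x ∧
      Dt2 E (Fge E s (n + k) n) t x = s * I * E * (2 * n + 1) * Fge E s (n + k) n t x := by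
  obtain ⟨C, hF⟩ := exists_Fge_eq_lightConeProd E s n k
  set a : ℂ := s * I * E with ha
  set c := fun j => C * laguerreCoeff a k n j
  have hc : ∀ i < n, (i + 1) * (k + i + 1) * c (i + 1) = -a * (n - i) * c i := fun i hi => by
    linear_combination C * laguerreCoeff_succ a k hi
  have hS := hasDerivAt_polySum c n
  have hS' := hasDerivAt_polySumDeriv c n
  have ha2 : a ^ 2 = -E ^ 2 := by rw [ha, mul_pow, mul_pow, hs, I_sq]; ring
  have hode : ∀ u, u * expGauge a (fun v => polySumDeriv2 c n v - a / 2 * polySumDeriv c n v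
        - a / 2 * (polySumDeriv c n v - a / 2 * polySum c n v)) u
      + (k + 1) * expGauge a (fun v => polySumDeriv c n v - a / 2 * polySum c n v) u
      = (-a * (2 * n + k + 1) / 2 - E ^ 2 * u / 4) * expGauge a (polySum c n) u := fun u => by
    rw [expGauge_ode (polySum_laguerre_ode c n hc u), ha2]
    ring
  have hEuler : ∀ v : ℂ, v * (k * v ^ (k - 1)) = k * v ^ k := fun v => by
    rcases k with _ | k
    · simp
    · rw [Nat.add_sub_cancel, pow_succ]; ring
  obtain ⟨hD2, hDt2⟩ := D2_lightConeProd_of_ode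
    (hasDerivAt_expGauge a hS)
    (hasDerivAt_expGauge a fun v => (hS' v).sub ((hS v).const_mul (a / 2)))
    (hasDerivAt_pow k) (fun v => (hasDerivAt_pow (k - 1) v).const_mul (k : ℂ)) hs hode hEuler t x
  rw [hF, hD2, hDt2, ha]
  constructor <;> ring

theorem dT_conj (f : ℝ → ℝ → ℂ) :
    dT (fun t x => starRingEnd ℂ (f t x)) = fun t x => starRingEnd ℂ (dT f t x) :=
  funext₂ fun _ _ => deriv.star

theorem dX_conj (f : ℝ → ℝ → ℂ) :
    dX (fun t x => starRingEnd ℂ (f t x)) = fun t x => starRingEnd ℂ (dX f t x) :=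
  funext₂ fun _ _ => deriv.star

theorem D2_conj (E : ℝ) (f : ℝ → ℝ → ℂ) (t x : ℝ) :
    D2 E (fun t x => starRingEnd ℂ (f t x)) t x = starRingEnd ℂ (Dt2 E f t x) := by
  simp only [D2, Dt2, dT_conj, dX_conj, map_mul, map_add, map_sub, map_neg, map_div₀, map_one,
    map_pow, map_ofNat, conj_I, conj_ofReal]
  ring

theorem Dt2_conj (E : ℝ) (f : ℝ → ℝ → ℂ) (t x : ℝ) :
    Dt2 E (fun t x => starRingEnd ℂ (f t x)) t x = starRingEnd ℂ (D2 E f t x) := by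
  simp only [D2, Dt2, dT_conj, dX_conj, map_mul, map_add, map_sub, map_neg, map_div₀, map_one,
    map_pow, map_ofNat, conj_I, conj_ofReal]
  ring

theorem Fmn_eigenfunctions_general (E : ℝ) (m n : ℕ) (s : ℝ)
    (hs : s = 1 ∨ s = -1) (t x : ℝ) :
    D2 E (Fmn E s m n) t x
        = (s : ℂ) * (2 * Complex.I * (E : ℂ)) * ((m : ℂ) + 1 / 2) * Fmn E s m n t x
      ∧ Dt2 E (Fmn E s m n) t x
          = (s : ℂ) * (2 * Complex.I * (E : ℂ)) * ((n : ℂ) + 1 / 2) * Fmn E s m n t x := by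
  have hs2 : (s : ℂ) ^ 2 = 1 := by rcases hs with rfl | rfl <;> norm_num
  rcases le_or_gt n m with hnm | hmn
  · obtain ⟨k, rfl⟩ := Nat.exists_eq_add_of_le hnm
    have hF : Fmn E s (n + k) n = Fge E s (n + k) n := funext₂ fun _ _ => if_pos hnm
    obtain ⟨hD2, hDt2⟩ := Fge_eigenfunctions E s hs2 n k t x
    rw [hF, hD2, hDt2]
    push_cast
    constructor <;> ring
  · obtain ⟨k, rfl⟩ := Nat.exists_eq_add_of_le hmn.le
    have hF : Fmn E s m (m + k) = fun t x => starRingEnd ℂ (Fge E (-s) (m + k) m t x) :=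
      funext₂ fun _ _ => if_neg (by omega)
    obtain ⟨hD2, hDt2⟩ := Fge_eigenfunctions E (-s) (by push_cast; rwa [neg_sq]) m k t x
    rw [hF, D2_conj, Dt2_conj, hD2, hDt2]
    simp only [map_mul, map_add, map_one, map_ofNat, map_natCast, conj_I, conj_ofReal]
    push_cast
    constructor <;> ring

/-- the `F^±_{m,n}` are simultaneous generalized eigenfunctions
of `D²` and `D̃²`: `D²F^±_{m,n} = ±2iE(m+½)F^±_{m,n}` and
`D̃²F^±_{m,n} = ±2iE(n+½)F^±_{m,n}`. -/
theorem Fmn_eigenfunctions (E : ℝ) (hE : 0 < E) (m n : ℕ) (s : ℝ)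
    (hs : s = 1 ∨ s = -1) (t x : ℝ) :
    D2 E (Fmn E s m n) t x
        = (s : ℂ) * (2 * Complex.I * (E : ℂ)) * ((m : ℂ) + 1 / 2) * Fmn E s m n t x
      ∧ Dt2 E (Fmn E s m n) t x
          = (s : ℂ) * (2 * Complex.I * (E : ℂ)) * ((n : ℂ) + 1 / 2) * Fmn E s m n t x :=
  Fmn_eigenfunctions_general E m n s hs t x
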